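/- arXiv:0709.0897 — 7 statements merged into one kernel-verified Lean document; each statement's English description precedes it below -/
import Mathlib

section
/- Let λ be a partition with r rows and c columns, and set t = r + c. Then the set of first-column hook lengths {h(i,1) : 1 ≤ i ≤ r} together with the set {(t−1) − h(1,j) : 1 ≤ j ≤ c} forms a partition of the set {0, 1, …, t−1} into two disjoint parts whose union is all of {0,…,t−1}. -/
/-- A partition: a weakly decreasing list of positive integers. -/
def IsPartition (l : List ℕ) : Prop :=
  l.Pairwise (· ≥ ·) ∧ ∀ x ∈ l, 0 < x

/-- Hook length of the box in row `i`, column `j` (0-indexed):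
arm (number of boxes strictly to the right) + leg (boxes strictly below) + 1. -/
def hook (l : List ℕ) (i j : ℕ) : ℕ :=
  (l.getD i 0 - j) + ((Finset.range l.length).filter (fun k => i < k ∧ j < l.getD k 0)).card

/-- The multiset of all hook lengths of a partition. -/
def hookMultiset (l : List ℕ) : Multiset ℕ :=
  ↑((List.range l.length).flatMap fun i => (List.range (l.getD i 0)).map fun j => hook l i j)

/-- The set of first-column hook lengths. -/
def firstColHooks (l : List ℕ) : Finset ℕ :=
  (Finset.range l.length).image fun i => hook l i 0

/-- The multiset `{s - t : s ∈ S, t ∈ T, s > t}`. -/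
def posDiffs (S T : Finset ℕ) : Multiset ℕ :=
  ((S ×ˢ T).filter fun q => q.2 < q.1).val.map fun q => q.1 - q.2

/-- The remnant of a partition: the complement in the `r × c` rectangle, rotated 180°. -/
def remnant (l : List ℕ) : List ℕ :=
  ((l.reverse).map fun x => l.headD 0 - x).filter fun x => decide (0 < x)

/-- The front section of the first `p` rows: delete all full-height columns but the rightmost. -/
def frontSection (l : List ℕ) (p : ℕ) : List ℕ :=
  (l.take p).map fun v => v + 1 - l.getD (p - 1) 0

/-- The extension `λ_p - λ_{p+1}` of a partition with respect to period `p`. -/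
def extension (l : List ℕ) (p : ℕ) : ℕ :=
  l.getD (p - 1) 0 - l.getD p 0

/-- The multiset of differences `{c_i - c_j : i < j}` of a (decreasing) list. -/
def listDiffs (ch : List ℕ) : Multiset ℕ :=
  ↑((List.range ch.length).flatMap fun i =>
    ((List.range ch.length).filter fun j => decide (i < j)).map fun j => ch.getD i 0 - ch.getD j 0)

/-- The characteristic of a front section: its first-column hook lengths. -/
def charList (fs : List ℕ) : List ℕ :=
  (List.range fs.length).map fun i => hook fs i 0

/-- The multiset of missing hook numbers of the ∞-partition formed from the top `p` rows. -/
def missingHooks (l : List ℕ) (p : ℕ) : Multiset ℕ :=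
  listDiffs (charList (frontSection l p))

/-- Reconstruct a partition from a `p`-partition datum: front section `fs` atop
remainder `rem`, with extension `x`. -/
def assemble (fs rem : List ℕ) (x : ℕ) : List ℕ :=
  (fs.map fun v => v + (rem.headD 0 + x) - 1) ++ rem

/-- Increment the first `p` parts of `l` by `n`. -/
def bump (l : List ℕ) (p n : ℕ) : List ℕ :=
  ((l.take p).map fun v => v + n) ++ l.drop p

/-- The difference multiset `{a i - a j : 1 ≤ i < j ≤ p}` of a (1-indexed) sequence. -/
def seqDiffs (a : ℕ → ℕ) (p : ℕ) : Multiset ℕ :=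
  ((Finset.Icc 1 p ×ˢ Finset.Icc 1 p).filter fun q => q.1 < q.2).val.map fun q => a q.1 - a q.2

/-- Multiplicity of `m` among the hook lengths of the ∞-partition with front section `f`:
the number of rows `i` containing a box (possibly at a negative column `j`) of hook length `m`. -/
noncomputable def infMult (f : List ℕ) (m : ℕ) : ℕ :=
  Set.ncard {i : ℕ | i < f.length ∧ ∃ j : ℤ, j < (f.getD i 0 : ℤ) ∧
    ((f.getD i 0 : ℤ) - j) +
      (((Finset.range f.length).filter fun k => i < k ∧ j < (f.getD k 0 : ℤ)).card : ℤ) = (m : ℤ)}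

/-- The characteristic set of the enveloping ∞-partition `E∞(λ)`:
`{a + t + 1 : a ∈ A} ∪ {a' + 1 : a' ∈ A'}`. -/
def envChar (l : List ℕ) : Finset ℕ :=
  ((firstColHooks l).image fun a => a + (l.length + l.headD 0) + 1) ∪
  (((Finset.range (l.length + l.headD 0)) \ firstColHooks l).image fun a => a + 1)

/-- The missing-hook-number multiset of `E∞(λ)`: all positive pairwise differences
of the characteristic set. -/
def envMissing (l : List ℕ) : Multiset ℕ := posDiffs (envChar l) (envChar l)

/-- Number of parts of `l` exceeding `j`: the `(j+1)`-st part of the conjugate. -/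
def conjPart (l : List ℕ) (j : ℕ) : ℕ :=
  ((Finset.range l.length).filter fun k => j < l.getD k 0).card

/-- The enveloping partition `E(λ)`: a `t × t` square with the rotated reflection of `λ`
removed from the bottom-right, and copies of `λ` adjoined top-right and bottom-left. -/
def envelope (l : List ℕ) : List ℕ :=
  (l.map fun v => v + (l.length + l.headD 0)) ++
  ((List.range (l.headD 0)).map fun i =>
    (l.length + l.headD 0) - conjPart l (l.headD 0 - 1 - i)) ++ l

/-- Iteratively stack `d` copies of the front section `fs` atop `rem`, with extensions `x i`. -/
def stack (fs rem : List ℕ) (x : ℕ → ℕ) : ℕ → List ℕ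
  | 0 => rem
  | (i + 1) => assemble fs (stack fs rem x i) (x (i + 1))

/-!
Write `a i` for the `i`-th part of `λ` and `a' j` for the `j`-th part of its conjugate. Then
`h(i,0) = a i + r - 1 - i` is strictly decreasing in `i`, and `(t - 1) - h(0,j) = r + j - a' j`
is strictly increasing in `j`, so the two sets have `r` and `c` elements, all below `t`.
They are disjoint because `j < a i ↔ i < a' j`: this separates `a i - 1 - i` from `j - a' j`
by `j - i`. Hence they fill up `{0, …, t - 1}`.
-/

def dualTopRowHooks (l : List ℕ) : Finset ℕ :=
  (Finset.range (l.headD 0)).image fun j => (l.length + l.headD 0 - 1) - hook l 0 j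

section

variable {l : List ℕ}

lemma getD_pos_of_lt_length (hpos : ∀ x ∈ l, 0 < x) {i : ℕ} (hi : i < l.length) :
    0 < l.getD i 0 := by
  rw [List.getD_eq_getElem l 0 hi]
  exact hpos _ (List.getElem_mem hi)

lemma antitone_getD (hs : l.Pairwise (· ≥ ·)) : Antitone fun i => l.getD i 0 := by
  intro k i hki
  rcases hki.eq_or_lt with rfl | hlt
  · exact le_rfl
  by_cases hi : i < l.length
  · simp only [List.getD_eq_getElem l 0 hi, List.getD_eq_getElem l 0 (hlt.trans hi)]
    exact List.pairwise_iff_getElem.1 hs k i _ _ hlt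
  · simp only [List.getD_eq_default l 0 (not_lt.1 hi), zero_le]

lemma conjPart_le_length (j : ℕ) : conjPart l j ≤ l.length :=
  (Finset.card_filter_le _ _).trans_eq (Finset.card_range _)

lemma antitone_conjPart : Antitone (conjPart l) := by
  intro j j' h
  apply Finset.card_le_card
  intro k hk
  simp only [Finset.mem_filter, Finset.mem_range] at hk ⊢
  omega

/-- Since the rows satisfying `j < a k` form an initial segment, row `i` has a box in column `j`
exactly when `i` is smaller than their number. -/
lemma lt_getD_iff_lt_conjPart (hs : l.Pairwise (· ≥ ·)) (i j : ℕ) :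
    j < l.getD i 0 ↔ i < conjPart l j := by
  constructor
  · intro h
    have hi : i < l.length := by
      by_contra! hi
      rw [List.getD_eq_default l 0 hi] at h
      exact Nat.not_lt_zero j h
    have hsub : Finset.range (i + 1) ⊆ (Finset.range l.length).filter fun k => j < l.getD k 0 := by
      intro k hk
      simp only [Finset.mem_range] at hk
      simp only [Finset.mem_filter, Finset.mem_range]
      exact ⟨by omega, h.trans_le (antitone_getD hs (Nat.lt_succ_iff.1 hk))⟩
    simpa [conjPart] using Finset.card_le_card hsub
  · intro h
    by_contra! hc
    have hsub : ((Finset.range l.length).filter fun k => j < l.getD k 0) ⊆ Finset.range i := by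
      intro k hk
      simp only [Finset.mem_filter, Finset.mem_range] at hk ⊢
      by_contra! hik
      exact absurd (hk.2.trans_le (antitone_getD hs hik)) (not_lt.2 hc)
    have := Finset.card_le_card hsub
    simp only [Finset.card_range] at this
    unfold conjPart at h
    omega

lemma hook_firstCol_add (hpos : ∀ x ∈ l, 0 < x) {i : ℕ} (hi : i < l.length) :
    hook l i 0 + i + 1 = l.getD i 0 + l.length := by
  have hleg : ((Finset.range l.length).filter fun k => i < k ∧ 0 < l.getD k 0)
      = Finset.Ico (i + 1) l.length := by
    ext k
    simp only [Finset.mem_filter, Finset.mem_range, Finset.mem_Ico]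
    constructor
    · rintro ⟨hk, hik, -⟩
      omega
    · intro hk
      exact ⟨hk.2, by omega, getD_pos_of_lt_length hpos hk.2⟩
  have := getD_pos_of_lt_length hpos hi
  simp only [hook, hleg, Nat.card_Ico, Nat.sub_zero]
  omega

lemma hook_topRow_add {j : ℕ} (hj : j < l.headD 0) :
    hook l 0 j + j + 1 = l.headD 0 + conjPart l j := by
  rw [List.headD_eq_getD] at hj ⊢
  have hlen : 0 < l.length := by
    by_contra! h
    rw [List.getD_eq_default l 0 h] at hj
    exact Nat.not_lt_zero j hj
  have hzero : 0 ∈ (Finset.range l.length).filter fun k => j < l.getD k 0 := by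
    simpa [hlen] using hj
  have hleg : ((Finset.range l.length).filter fun k => 0 < k ∧ j < l.getD k 0)
      = ((Finset.range l.length).filter fun k => j < l.getD k 0).erase 0 := by
    ext k
    simp only [Finset.mem_filter, Finset.mem_range, Finset.mem_erase]
    omega
  have := Finset.card_pos.2 ⟨0, hzero⟩
  simp only [hook, hleg, Finset.card_erase_of_mem hzero]
  unfold conjPart at this ⊢
  omega

lemma strictAntiOn_hook_firstCol (hl : IsPartition l) :
    StrictAntiOn (fun i => hook l i 0) (Set.Iio l.length) := by
  intro i hi i' hi' hlt
  have := hook_firstCol_add hl.2 hi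
  have := hook_firstCol_add hl.2 hi'
  have : l.getD i' 0 ≤ l.getD i 0 := antitone_getD hl.1 hlt.le
  dsimp only
  omega

lemma strictMonoOn_dualTopRowHook :
    StrictMonoOn (fun j => (l.length + l.headD 0 - 1) - hook l 0 j) (Set.Iio (l.headD 0)) := by
  intro j hj j' hj' hlt
  have := hook_topRow_add hj
  have := hook_topRow_add hj'
  have := antitone_conjPart (l := l) hlt.le
  have := conjPart_le_length (l := l) j
  dsimp only
  omega

lemma card_firstColHooks (hl : IsPartition l) : (firstColHooks l).card = l.length := by
  rw [firstColHooks, Finset.card_image_of_injOn, Finset.card_range]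
  simpa using (strictAntiOn_hook_firstCol hl).injOn

lemma card_dualTopRowHooks : (dualTopRowHooks l).card = l.headD 0 := by
  rw [dualTopRowHooks, Finset.card_image_of_injOn, Finset.card_range]
  simpa using strictMonoOn_dualTopRowHook.injOn

lemma firstColHooks_subset_range (hl : IsPartition l) :
    firstColHooks l ⊆ Finset.range (l.length + l.headD 0) := by
  intro n hn
  simp only [firstColHooks, Finset.mem_image, Finset.mem_range] at hn ⊢
  obtain ⟨i, hi, rfl⟩ := hn
  have := hook_firstCol_add hl.2 hi
  have : l.getD i 0 ≤ l.getD 0 0 := antitone_getD hl.1 (Nat.zero_le i)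
  rw [List.headD_eq_getD]
  omega

lemma dualTopRowHooks_subset_range :
    dualTopRowHooks l ⊆ Finset.range (l.length + l.headD 0) := by
  intro n hn
  simp only [dualTopRowHooks, Finset.mem_image, Finset.mem_range] at hn ⊢
  obtain ⟨j, hj, rfl⟩ := hn
  omega

lemma disjoint_firstColHooks_dualTopRowHooks (hl : IsPartition l) :
    Disjoint (firstColHooks l) (dualTopRowHooks l) := by
  rw [Finset.disjoint_left]
  intro n hA hB
  simp only [firstColHooks, dualTopRowHooks, Finset.mem_image, Finset.mem_range] at hA hB
  obtain ⟨i, hi, rfl⟩ := hA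
  obtain ⟨j, hj, hij⟩ := hB
  have := hook_firstCol_add hl.2 hi
  have := hook_topRow_add hj
  have := lt_getD_iff_lt_conjPart hl.1 i j
  have := conjPart_le_length (l := l) j
  omega

end

theorem stmt2_general (l : List ℕ) (hl : IsPartition l) :
    Disjoint (firstColHooks l)
        ((Finset.range (l.headD 0)).image fun j => (l.length + l.headD 0 - 1) - hook l 0 j) ∧
      firstColHooks l ∪
        ((Finset.range (l.headD 0)).image fun j => (l.length + l.headD 0 - 1) - hook l 0 j)
      = Finset.range (l.length + l.headD 0) := by
  have hdisj := disjoint_firstColHooks_dualTopRowHooks hl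
  refine ⟨hdisj, Finset.eq_of_subset_of_card_le ?_ ?_⟩
  · exact Finset.union_subset (firstColHooks_subset_range hl) dualTopRowHooks_subset_range
  · rw [Finset.card_range, ← dualTopRowHooks, Finset.card_union_of_disjoint hdisj,
      card_firstColHooks hl, card_dualTopRowHooks]

/-- The first-column hooks together with `{(t-1) - h(1,j)}` partition `{0,…,t-1}`. -/
theorem stmt2 (l : List ℕ) (hl : IsPartition l) (hne : l ≠ []) :
    Disjoint (firstColHooks l)
        ((Finset.range (l.headD 0)).image fun j => (l.length + l.headD 0 - 1) - hook l 0 j) ∧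
      firstColHooks l ∪
        ((Finset.range (l.headD 0)).image fun j => (l.length + l.headD 0 - 1) - hook l 0 j)
      = Finset.range (l.length + l.headD 0) :=
  stmt2_general l hl
end

section
/- Let λ be a partition with r rows and c columns, t = r + c, A the set of first-column hook lengths of λ, and A′ the complement of A in {0,1,…,t−1}. Then the multiset of all hook lengths of λ equals the multiset {a − a′ : a ∈ A, a′ ∈ A′, a > a′}. -/
/-!
Number the rows `0, …, r - 1` from the top. The first-column hook of row `i` is
`aᵢ = λᵢ + (r - 1 - i)`, and these decrease strictly with `i`. For a box `(i, j)` the number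
`aᵢ - h(i, j) = j + #{k > i : λₖ ≤ j}` lies below `aᵢ` and is never some `aₘ`: if `λₘ > j`
it is smaller than `aₘ`, and if `λₘ ≤ j` it is larger. So `j ↦ aᵢ - h(i, j)` injects row `i`
into `A' ∩ [0, aᵢ)`, and that set has exactly `aᵢ - (r - 1 - i) = λᵢ` elements because
`A ∩ [0, aᵢ) = {aₘ : m > i}`. Hence the hooks of row `i` are `{aᵢ - a' : a' ∈ A', a' < aᵢ}`.
-/

theorem posDiffs_eq_bind (S T : Finset ℕ) :
    posDiffs S T = S.val.bind fun s => (T.filter (· < s)).val.map (s - ·) := by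
  rw [posDiffs, Finset.filter_val, Finset.product_val]
  simp only [SProd.sprod, Multiset.product]
  rw [Multiset.filter_bind, Multiset.map_bind]
  refine Multiset.bind_congr fun s _ => ?_
  rw [Multiset.filter_map, Finset.filter_val, Multiset.map_map]
  rfl

theorem List.lt_length_of_lt_getD {l : List ℕ} {a m : ℕ} (h : a < l.getD m 0) :
    m < l.length := by
  by_contra hm
  rw [List.getD_eq_default _ _ (not_lt.mp hm)] at h
  exact Nat.not_lt_zero a h

/-- The set `A'`. -/
def firstColHooksCompl (l : List ℕ) : Finset ℕ :=
  Finset.range (l.length + l.headD 0) \ firstColHooks l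

def legLength (l : List ℕ) (i j : ℕ) : ℕ :=
  ((Finset.range l.length).filter fun k => i < k ∧ j < l.getD k 0).card

theorem hook_eq_sub_add_legLength (l : List ℕ) (i j : ℕ) :
    hook l i j = (l.getD i 0 - j) + legLength l i j :=
  rfl

theorem legLength_anti (l : List ℕ) (i : ℕ) : Antitone (legLength l i) := fun _ _ hj =>
  Finset.card_le_card fun _ hk => by
    simp only [Finset.mem_filter] at hk ⊢
    exact ⟨hk.1, hk.2.1, lt_of_le_of_lt hj hk.2.2⟩

theorem hook_le_hook_zero (l : List ℕ) (i j : ℕ) : hook l i j ≤ hook l i 0 := by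
  have := legLength_anti l i (Nat.zero_le j)
  simp only [hook_eq_sub_add_legLength]
  omega

theorem hook_strictAntiOn (l : List ℕ) (i : ℕ) :
    StrictAntiOn (hook l i) (Set.Iio (l.getD i 0)) := fun j₁ _ j₂ hj₂ h => by
  have := legLength_anti l i h.le
  simp only [Set.mem_Iio] at hj₂
  simp only [hook_eq_sub_add_legLength]
  omega

namespace IsPartition

variable {l : List ℕ}

theorem getD_pos (hl : IsPartition l) {i : ℕ} (hi : i < l.length) : 0 < l.getD i 0 := by
  rw [List.getD_eq_getElem _ _ hi]
  exact hl.2 _ (List.getElem_mem hi)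

theorem getD_le_getD (hl : IsPartition l) {i m : ℕ} (h : i ≤ m) : l.getD m 0 ≤ l.getD i 0 := by
  rcases lt_or_ge m l.length with hm | hm
  · rcases h.eq_or_lt with rfl | h
    · rfl
    rw [List.getD_eq_getElem _ _ hm, List.getD_eq_getElem _ _ (h.trans hm)]
    exact List.pairwise_iff_getElem.mp hl.1 i m (h.trans hm) hm h
  · rw [List.getD_eq_default _ _ hm]
    exact Nat.zero_le _

theorem legLength_zero (hl : IsPartition l) (i : ℕ) : legLength l i 0 = l.length - i - 1 := by
  rw [legLength, ← Nat.card_Ioo]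
  congr 1
  ext k
  simp only [Finset.mem_filter, Finset.mem_range, Finset.mem_Ioo]
  exact ⟨fun h => ⟨h.2.1, h.1⟩, fun h => ⟨h.2, h.1, hl.getD_pos h.2⟩⟩

theorem hook_zero (hl : IsPartition l) (i : ℕ) :
    hook l i 0 = l.getD i 0 + (l.length - i - 1) := by
  rw [hook_eq_sub_add_legLength, hl.legLength_zero, Nat.sub_zero]

theorem sub_le_legLength (hl : IsPartition l) {i j m : ℕ} (hj : j < l.getD m 0) :
    m - i ≤ legLength l i j := by
  rw [← Nat.card_Ioc]
  refine Finset.card_le_card fun k hk => ?_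
  simp only [Finset.mem_Ioc] at hk
  simp only [Finset.mem_filter, Finset.mem_range]
  exact ⟨hk.2.trans_lt (List.lt_length_of_lt_getD hj), hk.1,
    hj.trans_le (hl.getD_le_getD hk.2)⟩

theorem legLength_le_sub (hl : IsPartition l) {i j m : ℕ} (hj : l.getD m 0 ≤ j) :
    legLength l i j ≤ m - i - 1 := by
  rw [← Nat.card_Ioo]
  refine Finset.card_le_card fun k hk => ?_
  simp only [Finset.mem_filter, Finset.mem_range] at hk
  simp only [Finset.mem_Ioo]
  refine ⟨hk.2.1, lt_of_not_ge fun hmk => ?_⟩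
  have := hl.getD_le_getD hmk
  omega

theorem hook_zero_strictAntiOn (hl : IsPartition l) :
    StrictAntiOn (hook l · 0) (Set.Iio l.length) := fun i _ m hm h => by
  have := hl.getD_le_getD h.le
  simp only [Set.mem_Iio] at hm
  simp only [hl.hook_zero]
  omega

theorem hook_zero_le (hl : IsPartition l) (i : ℕ) :
    hook l i 0 ≤ l.length + l.headD 0 := by
  have : l.headD 0 = l.getD 0 0 := by cases l <;> rfl
  have := hl.getD_le_getD (Nat.zero_le i)
  rw [hl.hook_zero]
  omega

theorem hook_zero_sub_hook_notMem_firstColHooks (hl : IsPartition l) {i j : ℕ}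
    (hj : j < l.getD i 0) : hook l i 0 - hook l i j ∉ firstColHooks l := by
  simp only [firstColHooks, Finset.mem_image, Finset.mem_range, not_exists, not_and]
  intro m hmr hm
  have hi₀ := hl.hook_zero i
  have hm₀ := hl.hook_zero m
  have hij := hook_eq_sub_add_legLength l i j
  rcases lt_or_ge j (l.getD m 0) with hjm | hjm
  · have := hl.sub_le_legLength (i := i) hjm
    rcases lt_or_ge i m with h | h
    · have := hl.getD_le_getD h.le; omega
    · have := hl.getD_le_getD h; omega
  · have := hl.legLength_le_sub (i := i) hjm
    rcases lt_or_ge i m with h | h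
    · have := hl.getD_le_getD h.le; omega
    · have := hl.getD_le_getD h; omega

theorem firstColHooks_filter_lt (hl : IsPartition l) {i : ℕ} (hi : i < l.length) :
    (firstColHooks l).filter (· < hook l i 0) = (Finset.Ioo i l.length).image (hook l · 0) := by
  ext x
  simp only [firstColHooks, Finset.mem_filter, Finset.mem_image, Finset.mem_range,
    Finset.mem_Ioo]
  constructor
  · rintro ⟨⟨m, hm, rfl⟩, hlt⟩
    exact ⟨m, ⟨lt_of_not_ge fun hmi => hlt.not_ge
      (hl.hook_zero_strictAntiOn.antitoneOn hm hi hmi), hm⟩, rfl⟩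
  · rintro ⟨m, ⟨him, hm⟩, rfl⟩
    exact ⟨⟨m, hm, rfl⟩, hl.hook_zero_strictAntiOn hi hm him⟩

theorem card_filter_lt_hook_zero (hl : IsPartition l) {i : ℕ} (hi : i < l.length) :
    ((firstColHooksCompl l).filter (· < hook l i 0)).card = l.getD i 0 := by
  have hset : (firstColHooksCompl l).filter (· < hook l i 0)
      = Finset.range (hook l i 0) \ (firstColHooks l).filter (· < hook l i 0) := by
    ext x
    simp only [firstColHooksCompl, Finset.mem_filter, Finset.mem_sdiff, Finset.mem_range]
    have := hl.hook_zero_le i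
    constructor
    · rintro ⟨⟨-, hxA⟩, hx⟩
      exact ⟨hx, fun h => hxA h.1⟩
    · rintro ⟨hx, hxA⟩
      exact ⟨⟨by omega, fun h => hxA ⟨h, hx⟩⟩, hx⟩
  have hsub : (firstColHooks l).filter (· < hook l i 0) ⊆ Finset.range (hook l i 0) :=
    fun x hx => Finset.mem_range.mpr (Finset.mem_filter.mp hx).2
  have hinj : Set.InjOn (hook l · 0) (Finset.Ioo i l.length) :=
    hl.hook_zero_strictAntiOn.injOn.mono fun m hm => (Finset.mem_Ioo.mp hm).2
  rw [hset, Finset.card_sdiff_of_subset hsub, hl.firstColHooks_filter_lt hi,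
    Finset.card_image_of_injOn hinj, Nat.card_Ioo, Finset.card_range, hl.hook_zero]
  omega

theorem map_hook_zero_sub_hook_range (hl : IsPartition l) {i : ℕ} (hi : i < l.length) :
    (Multiset.range (l.getD i 0)).map (fun j => hook l i 0 - hook l i j)
      = ((firstColHooksCompl l).filter (· < hook l i 0)).val := by
  have hinj : Set.InjOn (fun j => hook l i 0 - hook l i j) (Set.Iio (l.getD i 0)) :=
    fun j₁ h₁ j₂ h₂ h => (hook_strictAntiOn l i).injOn h₁ h₂ <| by
      have := hook_le_hook_zero l i j₁
      have := hook_le_hook_zero l i j₂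
      simp only at h
      omega
  have hnodup : ((Multiset.range (l.getD i 0)).map fun j => hook l i 0 - hook l i j).Nodup :=
    (Multiset.nodup_range _).map_on fun j₁ h₁ j₂ h₂ =>
      hinj (Multiset.mem_range.mp h₁) (Multiset.mem_range.mp h₂)
  refine Multiset.eq_of_le_of_card_le ((Multiset.le_iff_subset hnodup).mpr fun x hx => ?_) ?_
  · obtain ⟨j, hj, rfl⟩ := Multiset.mem_map.mp hx
    replace hj := Multiset.mem_range.mp hj
    have := hl.hook_zero_le i
    have := hook_le_hook_zero l i j
    have := hook_eq_sub_add_legLength l i j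
    simp only [firstColHooksCompl, Finset.mem_val, Finset.mem_filter, Finset.mem_sdiff,
      Finset.mem_range]
    exact ⟨⟨by omega, hl.hook_zero_sub_hook_notMem_firstColHooks hj⟩, by omega⟩
  · rw [Finset.card_val, hl.card_filter_lt_hook_zero hi, Multiset.card_map, Multiset.card_range]

theorem map_hook_range (hl : IsPartition l) {i : ℕ} (hi : i < l.length) :
    (Multiset.range (l.getD i 0)).map (hook l i)
      = ((firstColHooksCompl l).filter (· < hook l i 0)).val.map (hook l i 0 - ·) := by
  rw [← hl.map_hook_zero_sub_hook_range hi, Multiset.map_map]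
  refine Multiset.map_congr rfl fun j _ => ?_
  have := hook_le_hook_zero l i j
  simp only [Function.comp_apply]
  omega

theorem firstColHooks_val (hl : IsPartition l) :
    (firstColHooks l).val = (Multiset.range l.length).map (hook l · 0) := by
  rw [firstColHooks, Finset.image_val, Finset.range_val, Multiset.dedup_eq_self]
  exact (Multiset.nodup_range _).map_on fun _ h₁ _ h₂ =>
    hl.hook_zero_strictAntiOn.injOn (Multiset.mem_range.mp h₁) (Multiset.mem_range.mp h₂)

end IsPartition

theorem stmt3_general (l : List ℕ) (hl : IsPartition l) :
    hookMultiset l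
      = posDiffs (firstColHooks l)
          (Finset.range (l.length + l.headD 0) \ firstColHooks l) := by
  rw [posDiffs_eq_bind, hl.firstColHooks_val, Multiset.bind_map, hookMultiset,
    ← Multiset.coe_bind, Multiset.coe_range]
  refine Multiset.bind_congr fun i hi => ?_
  rw [← Multiset.map_coe, Multiset.coe_range]
  exact hl.map_hook_range (Multiset.mem_range.mp hi)

/-- `H(λ) = {a - a' : a ∈ A, a' ∈ A', a > a'}`. -/
theorem stmt3 (l : List ℕ) (hl : IsPartition l) (hne : l ≠ []) :
    hookMultiset l
      = posDiffs (firstColHooks l)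
          (Finset.range (l.length + l.headD 0) \ firstColHooks l) :=
  stmt3_general l hl
end

section
/- Let p ≥ 1 and let a_1 > a_2 > … > a_p = 1 be the characteristic of an ∞-partition of height p. Then the multiset of missing hook numbers of the ∞-partition equals {a_i − a_j : 1 ≤ i < j ≤ p}. Equivalently, regarding the characteristic as the set of first-column hook lengths of the corresponding front section, the multiset of positive integers m such that m appears fewer than p times among the hook lengths of the ∞-partition, counted with multiplicity p minus its multiplicity, is {a_i − a_j : 1 ≤ i < j ≤ p}. -/
/-! With `p` rows and overhangs `λ_0 ≥ … ≥ λ_{p-1}`, the first-column hooks `a_k = λ_k + p - 1 - k`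
are strictly decreasing. Along row `i`, the hook lengths of the boxes, read from right to left,
run through the positive integers skipping exactly the values `a_i - a_k` with `k > i`: the leg
of the box in column `j` counts the rows `k > i` with `j < λ_k`, and these rows form an initial
segment. So a positive `m` is a hook length in row `i` (necessarily once) unless `m = a_i - a_k`
for some `k > i`, and such a `k` is unique. Summing over the `p` rows gives
`count m {a_i - a_k : i < k} + (multiplicity of m) = p`. -/

open Finset

theorem le_add_card_filter_iff {P : ℕ → Prop} [DecidablePred P] {i p k : ℕ}
    (hP : ∀ ⦃k k'⦄, k' ≤ k → k < p → P k → P k') (hik : i < k) (hkp : k < p) :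
    P k ↔ k ≤ i + #{k ∈ range p | i < k ∧ P k} := by
  constructor
  · intro hk
    have hsub : Ioc i k ⊆ {k ∈ range p | i < k ∧ P k} := fun k' hk' => by
      rw [mem_Ioc] at hk'
      exact mem_filter.2 ⟨mem_range.2 (hk'.2.trans_lt hkp), hk'.1, hP hk'.2 hkp hk⟩
    have := card_le_card hsub
    rw [Nat.card_Ioc] at this
    omega
  · intro hle
    by_contra hk
    have hsub : {k ∈ range p | i < k ∧ P k} ⊆ Ioo i k := fun k' hk' => by
      rw [mem_filter, mem_range] at hk'
      exact mem_Ioo.2 ⟨hk'.2.1, lt_of_not_ge fun h => hk (hP h hk'.1 hk'.2.2)⟩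
    have := card_le_card hsub
    rw [Nat.card_Ioo] at this
    omega

theorem count_listDiffs (l : List ℕ) (m : ℕ) :
    (listDiffs l).count m = ∑ i ∈ range l.length,
      #{j ∈ range l.length | i < j ∧ l.getD i 0 - l.getD j 0 = m} := by
  rw [listDiffs, Multiset.coe_count, List.count_flatMap, ← List.sum_toFinset _ List.nodup_range,
    List.toFinset_range]
  refine sum_congr rfl fun i _ => ?_
  rw [Function.comp_apply, card_def, filter_val, range_val, Multiset.range, Multiset.filter_coe,
    Multiset.coe_card, List.count_eq_countP, List.countP_map, List.countP_filter,
    List.countP_eq_length_filter]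
  congr 2
  ext j
  simp [Bool.and_comm, beq_eq_decide]

theorem count_listDiffs_of_nodup {l : List ℕ} (hl : l.Nodup) {m : ℕ} (hm : 0 < m) :
    (listDiffs l).count m =
      #{i ∈ range l.length | ∃ j ∈ Ioo i l.length, l.getD i 0 = l.getD j 0 + m} := by
  rw [count_listDiffs, card_filter]
  refine sum_congr rfl fun i _ => ?_
  split_ifs with h
  · obtain ⟨j, hj, hji⟩ := h
    rw [mem_Ioo] at hj
    rw [card_eq_one]
    refine ⟨j, eq_singleton_iff_unique_mem.2
      ⟨mem_filter.2 ⟨mem_range.2 hj.2, hj.1, by omega⟩, fun j' hj' => ?_⟩⟩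
    rw [mem_filter, mem_range] at hj'
    rw [List.getD_eq_getElem _ 0 hj.2, List.getD_eq_getElem _ 0 hj'.1] at *
    exact hl.getElem_inj_iff.1 (by omega)
  · rw [card_eq_zero, filter_eq_empty_iff]
    intro j hj hj'
    exact h ⟨j, mem_Ioo.2 ⟨hj'.1, mem_range.1 hj⟩, by omega⟩

theorem IsPartition.getD_pos_s6 {f : List ℕ} (hf : IsPartition f) {k : ℕ} (hk : k < f.length) :
    0 < f.getD k 0 := by
  rw [List.getD_eq_getElem f 0 hk]
  exact hf.2 _ (List.getElem_mem hk)

theorem IsPartition.antitone_getD {f : List ℕ} (hf : IsPartition f) : Antitone (f.getD · 0) := by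
  intro k' k hkk
  rcases lt_or_ge k f.length with hk | hk
  · rcases hkk.eq_or_lt with rfl | hlt
    · rfl
    · simp only [List.getD_eq_getElem f 0 hk, List.getD_eq_getElem f 0 (hlt.trans hk)]
      exact hf.1.rel_get_of_lt (a := ⟨k', hlt.trans hk⟩) (b := ⟨k, hk⟩) hlt
  · show f.getD k 0 ≤ f.getD k' 0
    rw [List.getD_eq_default f 0 hk]
    exact Nat.zero_le _

theorem IsPartition.hook_zero_add {f : List ℕ} (hf : IsPartition f) {k : ℕ} (hk : k < f.length) :
    hook f k 0 + k + 1 = f.getD k 0 + f.length := by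
  have hleg : (range f.length).filter (fun k' => k < k' ∧ 0 < f.getD k' 0) = Ioo k f.length := by
    ext k'
    simp only [mem_filter, mem_range, mem_Ioo]
    exact ⟨fun h => ⟨h.2.1, h.1⟩, fun h => ⟨h.2, h.1, hf.getD_pos_s6 h.2⟩⟩
  rw [hook, hleg, Nat.card_Ioo]
  omega

theorem IsPartition.hook_zero_add_le {f : List ℕ} (hf : IsPartition f) {k k' : ℕ} (hkk : k' ≤ k)
    (hk : k < f.length) : hook f k 0 + k ≤ hook f k' 0 + k' := by
  have : f.getD k 0 ≤ f.getD k' 0 := hf.antitone_getD hkk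
  have := hf.hook_zero_add hk
  have := hf.hook_zero_add (hkk.trans_lt hk)
  omega

theorem IsPartition.strictAntiOn_hook_zero {f : List ℕ} (hf : IsPartition f) :
    StrictAntiOn (hook f · 0) (Set.Iio f.length) := by
  intro k' _ k hk hlt
  have := hf.hook_zero_add_le hlt.le hk
  show hook f k 0 < hook f k' 0
  omega

@[simp]
theorem length_charList (f : List ℕ) : (charList f).length = f.length := by
  simp [charList]

theorem getD_charList (f : List ℕ) (i : ℕ) : (charList f).getD i 0 = hook f i 0 := by
  rcases lt_or_ge i f.length with hi | hi
  · rw [List.getD_eq_getElem _ 0 (by rwa [length_charList])]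
    simp [charList]
  · rw [List.getD_eq_default _ 0 (by rwa [length_charList]), hook,
      List.getD_eq_default f 0 hi, Nat.zero_sub, zero_add, eq_comm, card_eq_zero,
      filter_eq_empty_iff]
    intro k hk
    rw [mem_range] at hk
    omega

theorem IsPartition.nodup_charList {f : List ℕ} (hf : IsPartition f) : (charList f).Nodup :=
  (List.nodup_range).map_on fun _ hx _ hy h =>
    hf.strictAntiOn_hook_zero.injOn (by simpa using hx) (by simpa using hy) h

/- Row `i` of the ∞-partition with overhangs `f` consists of the boxes in the columns `j < f_i`,
`j ∈ ℤ`; `infLeg f i j` is the leg of the box `(i, j)`, and `infMult f m` counts the rows holding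
a box of hook length `m`. -/
def infLeg (f : List ℕ) (i : ℕ) (j : ℤ) : ℕ :=
  #{k ∈ range f.length | i < k ∧ j < (f.getD k 0 : ℤ)}

def HasInfHook (f : List ℕ) (i m : ℕ) : Prop :=
  ∃ j : ℤ, j < (f.getD i 0 : ℤ) ∧ ((f.getD i 0 : ℤ) - j) + infLeg f i j = (m : ℤ)

theorem infMult_eq_ncard (f : List ℕ) (m : ℕ) :
    infMult f m = Set.ncard {i | i < f.length ∧ HasInfHook f i m} :=
  rfl

theorem IsPartition.lt_getD_iff_le_add_infLeg {f : List ℕ} (hf : IsPartition f) {i k : ℕ}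
    {j : ℤ} (hik : i < k) (hk : k < f.length) : j < f.getD k 0 ↔ k ≤ i + infLeg f i j :=
  le_add_card_filter_iff (P := fun k => j < f.getD k 0)
    (fun _ _ hkk _ h => h.trans_le (by exact_mod_cast hf.antitone_getD hkk)) hik hk

theorem IsPartition.hook_zero_ne_of_hasInfHook {f : List ℕ} (hf : IsPartition f) {i m k : ℕ}
    (h : HasInfHook f i m) (hk : k ∈ Ioo i f.length) : hook f i 0 ≠ hook f k 0 + m := by
  obtain ⟨j, -, hj⟩ := h
  rw [mem_Ioo] at hk
  have := hf.lt_getD_iff_le_add_infLeg (j := j) hk.1 hk.2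
  have := hf.hook_zero_add hk.2
  have := hf.hook_zero_add (hk.1.trans hk.2)
  omega

theorem IsPartition.hasInfHook_of_forall_ne {f : List ℕ} (hf : IsPartition f) {i m : ℕ}
    (hi : i < f.length) (hm : 0 < m) (h : ∀ k ∈ Ioo i f.length, hook f i 0 ≠ hook f k 0 + m) :
    HasInfHook f i m := by
  -- The `k > i` with `a_k > a_i - m` are `i < k ≤ i + s`; column `f_i - m + s` has leg `s`.
  set s := #{k ∈ range f.length | i < k ∧ hook f i 0 < hook f k 0 + m}
  have hs : ∀ k, i < k → k < f.length → (hook f i 0 < hook f k 0 + m ↔ k ≤ i + s) :=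
    fun k hik hk => le_add_card_filter_iff (P := fun k => hook f i 0 < hook f k 0 + m)
      (fun _ _ hkk hk h => h.trans_le (by have := hf.hook_zero_add_le hkk hk; omega)) hik hk
  have hsp : s ≤ f.length - i - 1 := by
    refine (card_le_card fun k hk => ?_).trans (Nat.card_Ioo i f.length).le
    rw [mem_filter, mem_range] at hk
    exact mem_Ioo.2 ⟨hk.2.1, hk.1⟩
  have hleg : infLeg f i ((f.getD i 0 : ℤ) - m + s) = s := by
    refine congrArg card (filter_congr fun k hk => and_congr_right fun hik => ?_)
    rw [mem_range] at hk
    rw [hs k hik hk]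
    have := hf.hook_zero_add hi
    have := hf.hook_zero_add hk
    rcases le_or_gt k (i + s) with hks | hks
    · have := (hs (i + s) (by omega) (by omega)).2 le_rfl
      have := hf.hook_zero_add_le hks (by omega)
      omega
    · have := mt (hs (i + s + 1) (by omega) (by omega)).1 (by omega)
      have := h (i + s + 1) (mem_Ioo.2 ⟨by omega, by omega⟩)
      have := hf.hook_zero_add_le (show i + s + 1 ≤ k by omega) hk
      omega
  have hsm : s < m := by
    rcases Nat.eq_zero_or_pos s with hs0 | hs0
    · omega
    · have := (hs (i + s) (by omega) (by omega)).2 le_rfl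
      have := hf.hook_zero_add_le (show i ≤ i + s by omega) (by omega)
      omega
  exact ⟨(f.getD i 0 : ℤ) - m + s, by omega, by rw [hleg]; omega⟩

theorem IsPartition.infMult_eq_card {f : List ℕ} (hf : IsPartition f) {m : ℕ} (hm : 0 < m) :
    infMult f m = #{i ∈ range f.length | ¬∃ k ∈ Ioo i f.length, hook f i 0 = hook f k 0 + m} := by
  rw [infMult_eq_ncard, ← Set.ncard_coe_finset, coe_filter]
  congr 1
  ext i
  simp only [Set.mem_ofPred_eq, mem_range, not_exists, not_and]
  exact and_congr_right fun hi =>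
    ⟨fun h _ hk => hf.hook_zero_ne_of_hasInfHook h hk, hf.hasInfHook_of_forall_ne hi hm⟩

theorem stmt6_general (f : List ℕ) (hf : IsPartition f) :
    ∀ m : ℕ, 0 < m →
      Multiset.count m (listDiffs (charList f)) + infMult f m = f.length := by
  intro m hm
  rw [count_listDiffs_of_nodup hf.nodup_charList hm, hf.infMult_eq_card hm]
  simp only [length_charList, getD_charList]
  rw [card_filter_add_card_filter_not, card_range]

/-- The missing hook numbers of an ∞-partition with front section `f` (characteristic
`(a_1,…,a_p)`, the first-column hooks of `f`) are `{a_i - a_j : i < j}`: each positive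
`m` appears `p - (multiplicity of m)` times there. -/
theorem stmt6 (f : List ℕ) (hf : IsPartition f) (hne : f ≠ [])
    (hlast : f.getD (f.length - 1) 0 = 1) :
    ∀ m : ℕ, 0 < m →
      Multiset.count m (listDiffs (charList f)) + infMult f m = f.length :=
  stmt6_general f hf
end

section
/- Let (a_1,…,a_p) be a strictly decreasing sequence of positive integers with a_p = 1 (the characteristic of an ∞-partition), let x ≥ a_1 be an integer, and form the sequence (a_1+x, …, a_p+x, a_1, …, a_p) of length 2p. Then the multiset of pairwise differences (larger minus smaller over all ordered pairs i < j) of the new sequence equals 2·D ∪ p·{x} ∪ {x + d : d ∈ D} ∪ {x − d : d ∈ D}, where D = {a_i − a_j : 1 ≤ i < j ≤ p}. In particular, if two such sequences (a_i) and (b_i) have equal difference multisets D, then the corresponding doubled sequences also have equal difference multisets. -/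
/-!
Split the pairs `i < j` of the doubled sequence into those inside the first block, those inside
the second block, and the cross pairs `(i, j + p)`. Adding the constant `x` does not change
differences, so each block contributes `D`. A cross pair has difference `a i + x - a j`, which is
`x + d`, `x` or `x - d` according as `i < j`, `i = j` or `i > j`, with `d` running over `D`.
-/

open Finset

def ltPairs {α : Type*} [LinearOrder α] (s : Finset α) : Finset (α × α) :=
  (s ×ˢ s).filter fun q => q.1 < q.2

theorem sum_product_self_eq {α M : Type*} [LinearOrder α] [AddCommMonoid M] (s : Finset α)
    (f : α × α → M) :
    ∑ q ∈ s ×ˢ s, f q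
      = ∑ q ∈ ltPairs s, f q + ∑ i ∈ s, f (i, i) + ∑ q ∈ ltPairs s, f q.swap := by
  rw [← sum_filter_add_sum_filter_not _ (fun q => q.1 < q.2),
    ← sum_filter_add_sum_filter_not ((s ×ˢ s).filter fun q => ¬ q.1 < q.2)
      (fun q => q.1 = q.2),
    add_assoc]
  congr 2
  · refine sum_nbij' Prod.fst (fun i => (i, i)) ?_ ?_ ?_ ?_ ?_ <;> simp +contextual
  · refine sum_nbij' Prod.swap Prod.swap ?_ ?_ ?_ ?_ ?_ <;> simp +contextual [ltPairs]
    exacts [fun _ _ _ _ h h' => lt_of_le_of_ne h (Ne.symm h'), fun _ _ _ _ h => ⟨h.le, h.ne'⟩]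

theorem Finset.map_val_eq_sum_singleton {ι α : Type*} (s : Finset ι) (f : ι → α) :
    s.val.map f = ∑ i ∈ s, {f i} := by
  rw [← Multiset.sum_map_singleton (s.val.map f), Multiset.map_map]; rfl

theorem map_seqDiffs_eq_sum {α : Type*} (a : ℕ → ℕ) (n : ℕ) (g : ℕ → α) :
    (seqDiffs a n).map g = ∑ q ∈ ltPairs (Icc 1 n), {g (a q.1 - a q.2)} := by
  rw [seqDiffs, Multiset.map_map]
  exact map_val_eq_sum_singleton _ _

theorem seqDiffs_eq_sum (a : ℕ → ℕ) (n : ℕ) :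
    seqDiffs a n = ∑ q ∈ ltPairs (Icc 1 n), {a q.1 - a q.2} := by
  simpa using map_seqDiffs_eq_sum a n id

theorem seqDiffs_congr {a b : ℕ → ℕ} {n : ℕ} (h : ∀ i ∈ Icc 1 n, a i = b i) :
    seqDiffs a n = seqDiffs b n := by
  simp only [seqDiffs_eq_sum]
  refine sum_congr rfl fun q hq => ?_
  simp only [ltPairs, mem_filter, mem_product] at hq
  rw [h _ hq.1.1, h _ hq.1.2]

theorem seqDiffs_add_const (a : ℕ → ℕ) (n x : ℕ) :
    seqDiffs (fun i => a i + x) n = seqDiffs a n :=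
  Multiset.map_congr rfl fun _ _ => Nat.add_sub_add_right _ _ _

theorem seqDiffs_add (c : ℕ → ℕ) (m n : ℕ) :
    seqDiffs c (m + n) = seqDiffs c m + seqDiffs (fun i => c (i + m)) n
      + ∑ q ∈ Icc 1 m ×ˢ Icc 1 n, {c q.1 - c (q.2 + m)} := by
  simp only [seqDiffs_eq_sum]
  set S := ltPairs (Icc 1 (m + n))
  set f : ℕ × ℕ → Multiset ℕ := fun q => {c q.1 - c q.2}
  have h_left : ∑ q ∈ ltPairs (Icc 1 m), f q = ∑ q ∈ S.filter (·.2 ≤ m), f q := by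
    refine sum_nbij' id id ?_ ?_ ?_ ?_ ?_ <;> simp +contextual [S, ltPairs] <;> omega
  have h_right : ∑ q ∈ ltPairs (Icc 1 n), f (q.1 + m, q.2 + m)
      = ∑ q ∈ (S.filter (¬ ·.2 ≤ m)).filter (¬ ·.1 ≤ m), f q := by
    refine sum_nbij' (fun q => (q.1 + m, q.2 + m)) (fun q => (q.1 - m, q.2 - m))
      ?_ ?_ ?_ ?_ ?_ <;> simp +contextual [S, ltPairs] <;> omega
  have h_cross : ∑ q ∈ Icc 1 m ×ˢ Icc 1 n, f (q.1, q.2 + m)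
      = ∑ q ∈ (S.filter (¬ ·.2 ≤ m)).filter (·.1 ≤ m), f q := by
    refine sum_nbij' (fun q => (q.1, q.2 + m)) (fun q => (q.1, q.2 - m))
      ?_ ?_ ?_ ?_ ?_ <;> simp +contextual [S, ltPairs] <;> omega
  change _ = ∑ q ∈ ltPairs (Icc 1 m), f q + ∑ q ∈ ltPairs (Icc 1 n), f (q.1 + m, q.2 + m)
    + ∑ q ∈ Icc 1 m ×ˢ Icc 1 n, f (q.1, q.2 + m)
  rw [h_left, h_right, h_cross, ← sum_filter_add_sum_filter_not S (·.2 ≤ m),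
    ← sum_filter_add_sum_filter_not (S.filter (¬ ·.2 ≤ m)) (·.1 ≤ m)]
  abel

theorem sum_Icc_product_add_sub {a : ℕ → ℕ} {p : ℕ} (ha : AntitoneOn a (Set.Icc 1 p))
    (x : ℕ) :
    ∑ q ∈ Icc 1 p ×ˢ Icc 1 p, ({a q.1 + x - a q.2} : Multiset ℕ)
      = (seqDiffs a p).map (x + ·) + Multiset.replicate p x + (seqDiffs a p).map (x - ·) := by
  have hle : ∀ q ∈ ltPairs (Icc 1 p), a q.2 ≤ a q.1 := fun q hq => by
    simp only [ltPairs, mem_filter, mem_product] at hq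
    exact ha (by simpa using hq.1.1) (by simpa using hq.1.2) hq.2.le
  rw [sum_product_self_eq, map_seqDiffs_eq_sum, map_seqDiffs_eq_sum]
  congr 1
  · congr 1
    · exact sum_congr rfl fun q hq => by have := hle q hq; congr 1; omega
    · simp [Multiset.nsmul_singleton]
  · refine sum_congr rfl fun q hq => ?_
    have := hle q hq
    -- in ℕ both sides truncate to `0` when `x < a q.1 - a q.2`
    simp only [Prod.fst_swap, Prod.snd_swap]
    congr 1
    omega

theorem seqDiffs_double {a : ℕ → ℕ} {p : ℕ} (ha : AntitoneOn a (Set.Icc 1 p)) (x : ℕ) :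
    seqDiffs (fun i => if i ≤ p then a i + x else a (i - p)) (2 * p)
      = seqDiffs a p + seqDiffs a p + Multiset.replicate p x
        + (seqDiffs a p).map (x + ·) + (seqDiffs a p).map (x - ·) := by
  set c : ℕ → ℕ := fun i => if i ≤ p then a i + x else a (i - p)
  have h_left : seqDiffs c p = seqDiffs a p :=
    (seqDiffs_congr fun i hi => if_pos (mem_Icc.1 hi).2).trans (seqDiffs_add_const a p x)
  have h_right : seqDiffs (fun i => c (i + p)) p = seqDiffs a p :=
    seqDiffs_congr fun i hi => by simp [c, Nat.pos_iff_ne_zero.1 (mem_Icc.1 hi).1]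
  have h_cross : ∑ q ∈ Icc 1 p ×ˢ Icc 1 p, ({c q.1 - c (q.2 + p)} : Multiset ℕ)
      = ∑ q ∈ Icc 1 p ×ˢ Icc 1 p, {a q.1 + x - a q.2} :=
    sum_congr rfl fun q hq => by
      simp only [mem_product, mem_Icc] at hq
      simp [c, hq.1.2, Nat.pos_iff_ne_zero.1 hq.2.1]
  rw [two_mul, seqDiffs_add, h_left, h_right, h_cross, sum_Icc_product_add_sub ha]
  abel

theorem stmt9_general (p : ℕ) (a : ℕ → ℕ)
    (ha : ∀ i j, 1 ≤ i → i < j → j ≤ p → a j < a i) (x : ℕ) :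
    seqDiffs (fun i => if i ≤ p then a i + x else a (i - p)) (2 * p)
      = seqDiffs a p + seqDiffs a p + Multiset.replicate p x
        + (seqDiffs a p).map (fun d => x + d) + (seqDiffs a p).map (fun d => x - d)
    ∧ ∀ b : ℕ → ℕ, (∀ i j, 1 ≤ i → i < j → j ≤ p → b j < b i) → b p = 1 →
        seqDiffs b p = seqDiffs a p →
        seqDiffs (fun i => if i ≤ p then b i + x else b (i - p)) (2 * p)
          = seqDiffs (fun i => if i ≤ p then a i + x else a (i - p)) (2 * p) := by
  have antitone_of_lt :
      ∀ b : ℕ → ℕ, (∀ i j, 1 ≤ i → i < j → j ≤ p → b j < b i) →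
      AntitoneOn b (Set.Icc 1 p) := fun b hb =>
    StrictAntiOn.antitoneOn fun i hi j hj hij => hb i j hi.1 hij hj.2
  refine ⟨seqDiffs_double (antitone_of_lt a ha) x, fun b hb _ hba => ?_⟩
  rw [seqDiffs_double (antitone_of_lt b hb), seqDiffs_double (antitone_of_lt a ha), hba]

/-- Doubling a characteristic: the difference multiset of
`(a_1+x,…,a_p+x,a_1,…,a_p)` is `2·D ∪ p·{x} ∪ {x+d} ∪ {x-d}`; in particular equal
difference multisets are preserved by doubling. -/
theorem stmt9 (p : ℕ) (hp : 0 < p) (a : ℕ → ℕ)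
    (ha : ∀ i j, 1 ≤ i → i < j → j ≤ p → a j < a i)
    (hap : a p = 1) (x : ℕ) (hx : a 1 ≤ x) :
    seqDiffs (fun i => if i ≤ p then a i + x else a (i - p)) (2 * p)
      = seqDiffs a p + seqDiffs a p + Multiset.replicate p x
        + (seqDiffs a p).map (fun d => x + d) + (seqDiffs a p).map (fun d => x - d)
    ∧ ∀ b : ℕ → ℕ, (∀ i j, 1 ≤ i → i < j → j ≤ p → b j < b i) → b p = 1 →
        seqDiffs b p = seqDiffs a p →
        seqDiffs (fun i => if i ≤ p then b i + x else b (i - p)) (2 * p)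
          = seqDiffs (fun i => if i ≤ p then a i + x else a (i - p)) (2 * p) :=
  stmt9_general p a ha x
end

section
/- Let (a_1,…,a_p) and (b_1,…,b_p) be strictly decreasing sequences of positive integers with a_p = b_p = 1 and equal difference multisets {a_i − a_j : i<j} = {b_i − b_j : i<j}. Let x ≥ a_1 and form a′ = (a_1+x,…,a_p+x,a_1,…,a_p) and b′ = (b_1+x,…,b_p+x,b_1,…,b_p). Then {a′_i − a′_j : 1 ≤ i ≤ p, i < j ≤ 2p} = {b′_i − b′_j : 1 ≤ i ≤ p, i < j ≤ 2p} as multisets. -/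
open Finset

section PairDiffs

variable {ι : Type*} [LinearOrder ι]

def pairDiffs (s : Finset ι) (a : ι → ℕ) : Multiset ℕ :=
  ((s ×ˢ s).filter fun q => q.1 < q.2).val.map fun q => a q.1 - a q.2

theorem val_product_self_eq (s : Finset ι) :
    (s ×ˢ s).val = ((s ×ˢ s).filter fun q => q.1 < q.2).val
      + ((s ×ˢ s).filter fun q => q.1 < q.2).val.map Prod.swap + s.diag.val := by
  set M := (s ×ˢ s).val
  have hswap : M.map Prod.swap = M := by
    have := congrArg Finset.val (map_swap_product s s)
    rwa [map_val] at this
  have hgt : M.filter (fun q => q.2 < q.1) = (M.filter fun q => q.1 < q.2).map Prod.swap := by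
    conv_lhs => rw [← hswap]
    rw [Multiset.filter_map]
    rfl
  have hdiag : s.diag.val = M.filter fun q => q.1 = q.2 := by
    rw [diag_eq_filter, filter_val]
  have hnlt : M.filter (fun q => ¬ q.1 < q.2)
      = M.filter (fun q => q.2 < q.1) + M.filter (fun q => q.1 = q.2) := by
    rw [← Multiset.filter_add_not (fun q : ι × ι => q.2 < q.1) (M.filter _),
      Multiset.filter_filter, Multiset.filter_filter]
    congr 1 <;> apply Multiset.filter_congr <;> intro q _
    · exact ⟨fun h => h.1, fun h => ⟨h, not_lt.2 h.le⟩⟩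
    · exact ⟨fun h => le_antisymm (not_lt.1 h.1) (not_lt.1 h.2),
        fun h => ⟨h.symm.not_lt, h.not_lt⟩⟩
  rw [filter_val, hdiag, ← hgt, add_assoc, ← hnlt, Multiset.filter_add_not]

theorem map_add_sub_product_self {s : Finset ι} {a : ι → ℕ} (ha : AntitoneOn a s) (x : ℕ) :
    (s ×ˢ s).val.map (fun q => a q.1 + x - a q.2)
      = (pairDiffs s a).map (x + ·) + (pairDiffs s a).map (x - ·)
        + Multiset.replicate s.card x := by
  have hmem : ∀ q ∈ (s ×ˢ s).filter (fun q => q.1 < q.2), a q.2 ≤ a q.1 := by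
    intro q hq
    simp only [mem_filter, mem_product] at hq
    exact ha hq.1.1 hq.1.2 hq.2.le
  rw [val_product_self_eq, Multiset.map_add, Multiset.map_add, pairDiffs, Multiset.map_map,
    Multiset.map_map, Multiset.map_map, diag, map_val, Multiset.map_map,
    ← card_val, ← Multiset.map_const']
  congr 1
  congr 1
  all_goals apply Multiset.map_congr rfl
  · intro q hq
    have := hmem q hq
    simp only [Function.comp_apply]
    omega
  · intro q hq
    have := hmem q hq
    simp only [Function.comp_apply, Prod.fst_swap, Prod.snd_swap]
    omega
  · intro i _
    simp

end PairDiffs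

theorem seqDiffs_eq_pairDiffs (a : ℕ → ℕ) (p : ℕ) : seqDiffs a p = pairDiffs (Icc 1 p) a := rfl

theorem antitoneOn_Icc_of_lt {p : ℕ} {a : ℕ → ℕ}
    (ha : ∀ i j, 1 ≤ i → i < j → j ≤ p → a j < a i) : AntitoneOn a (Icc 1 p) := by
  intro i hi j hj hij
  simp only [coe_Icc, Set.mem_Icc] at hi hj
  rcases hij.lt_or_eq with h | rfl
  · exact (ha i j hi.1 h hj.2).le
  · rfl

theorem filter_lt_product_Icc_two_mul_val (p : ℕ) :
    ((Icc 1 p ×ˢ Icc 1 (2 * p)).filter fun q => q.1 < q.2).val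
      = ((Icc 1 p ×ˢ Icc 1 p).filter fun q => q.1 < q.2).val
        + (Icc 1 p ×ˢ Icc 1 p).val.map fun q => (q.1, q.2 + p) := by
  have hinj : Function.Injective fun q : ℕ × ℕ => (q.1, q.2 + p) := by
    intro u v h
    simp only [Prod.ext_iff] at h ⊢
    omega
  rw [← Multiset.filter_add_not (fun q => q.2 ≤ p) (filter _ _).val, ← filter_val,
    ← filter_val, filter_filter, filter_filter,
    show (Icc 1 p ×ˢ Icc 1 p).val.map (fun q => (q.1, q.2 + p))
      = ((Icc 1 p ×ˢ Icc 1 p).map ⟨_, hinj⟩).val from rfl]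
  congr 2 <;> ext ⟨i, j⟩
  · simp only [mem_filter, mem_product, mem_Icc]
    omega
  · simp only [mem_filter, mem_product, mem_Icc, mem_map, Function.Embedding.coeFn_mk,
      Prod.mk.injEq, Prod.exists]
    constructor
    · intro h
      exact ⟨i, j - p, by omega, rfl, by omega⟩
    · rintro ⟨i, k, hk, rfl, rfl⟩
      omega

def doubledSeq (a : ℕ → ℕ) (p x i : ℕ) : ℕ := if i ≤ p then a i + x else a (i - p)

theorem doubledSeq_diffs {p : ℕ} {a : ℕ → ℕ} (ha : AntitoneOn a (Icc 1 p)) (x : ℕ) :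
    ((Icc 1 p ×ˢ Icc 1 (2 * p)).filter fun q => q.1 < q.2).val.map
        (fun q => doubledSeq a p x q.1 - doubledSeq a p x q.2)
      = seqDiffs a p + ((seqDiffs a p).map (x + ·) + (seqDiffs a p).map (x - ·)
        + Multiset.replicate p x) := by
  have hsquare := map_add_sub_product_self ha x
  rw [Nat.card_Icc, Nat.add_sub_cancel] at hsquare
  rw [filter_lt_product_Icc_two_mul_val, Multiset.map_add, Multiset.map_map,
    seqDiffs_eq_pairDiffs, ← hsquare, pairDiffs]
  congr 1 <;> apply Multiset.map_congr rfl <;> intro q hq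
  · simp only [mem_val, mem_filter, mem_product, mem_Icc] at hq
    simp only [doubledSeq, if_pos hq.1.1.2, if_pos hq.1.2.2]
    omega
  · simp only [mem_val, mem_product, mem_Icc] at hq
    simp only [Function.comp_apply, doubledSeq, if_pos hq.1.2, if_neg (by omega : ¬ q.2 + p ≤ p),
      Nat.add_sub_cancel]

theorem stmt10_general (p : ℕ) (a b : ℕ → ℕ)
    (ha : ∀ i j, 1 ≤ i → i < j → j ≤ p → a j < a i)
    (hb : ∀ i j, 1 ≤ i → i < j → j ≤ p → b j < b i)
    (heq : seqDiffs a p = seqDiffs b p) (x : ℕ) :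
    ((Finset.Icc 1 p ×ˢ Finset.Icc 1 (2 * p)).filter fun q => q.1 < q.2).val.map
        (fun q => (if q.1 ≤ p then a q.1 + x else a (q.1 - p))
          - (if q.2 ≤ p then a q.2 + x else a (q.2 - p)))
      = ((Finset.Icc 1 p ×ˢ Finset.Icc 1 (2 * p)).filter fun q => q.1 < q.2).val.map
        (fun q => (if q.1 ≤ p then b q.1 + x else b (q.1 - p))
          - (if q.2 ≤ p then b q.2 + x else b (q.2 - p))) := by
  have hda := doubledSeq_diffs (antitoneOn_Icc_of_lt ha) x
  rw [heq, ← doubledSeq_diffs (antitoneOn_Icc_of_lt hb) x] at hda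
  exact hda

/-- The differences `{a'_i - a'_j : 1 ≤ i ≤ p, i < j ≤ 2p}` of the doubled sequences agree. -/
theorem stmt10 (p : ℕ) (hp : 0 < p) (a b : ℕ → ℕ)
    (ha : ∀ i j, 1 ≤ i → i < j → j ≤ p → a j < a i)
    (hb : ∀ i j, 1 ≤ i → i < j → j ≤ p → b j < b i)
    (hap : a p = 1) (hbp : b p = 1)
    (heq : seqDiffs a p = seqDiffs b p) (x : ℕ) (hx : a 1 ≤ x) :
    ((Finset.Icc 1 p ×ˢ Finset.Icc 1 (2 * p)).filter fun q => q.1 < q.2).val.map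
        (fun q => (if q.1 ≤ p then a q.1 + x else a (q.1 - p))
          - (if q.2 ≤ p then a q.2 + x else a (q.2 - p)))
      = ((Finset.Icc 1 p ×ˢ Finset.Icc 1 (2 * p)).filter fun q => q.1 < q.2).val.map
        (fun q => (if q.1 ≤ p then b q.1 + x else b (q.1 - p))
          - (if q.2 ≤ p then b q.2 + x else b (q.2 - p))) :=
  stmt10_general p a b ha hb heq x
end

section
/- Suppose {λ, μ} is a periodic cluster of period p: for every n ≥ 0, the partitions obtained by incrementing the first p parts of λ and of μ by n have equal hook-length multisets. Then the remainders λ^(r) and μ^(r) have equal hook-length multisets if and only if the ∞-partitions λ_∞ and μ_∞ formed from the rumps have equal missing-hook-number multisets. -/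
/-!
Encode a partition by its beta set, the numbers `b_i = λ_i + (len - 1 - i)` (its first-column
hook lengths). The boxes of row `i` correspond to the numbers `g < b_i` outside the beta set, the
box having hook length `b_i - g`; so the multiplicity of `v` among the hook lengths is the number
of `b` in the beta set with `b - v` outside it.

Incrementing the first `p` parts by a large `n` lifts the top `p` beta numbers far above the
others. A lifted `b` yields a hook of length `v` unless `b - v` is lifted too, and the number of
such pairs of top beta numbers is the multiplicity of `v` among their differences, i.e. among the
missing hook numbers of the ∞-partition. Hence for `v > 0`
`#H_v(λ^(p,n)) + #b̄H_v(λ_∞) = p + #H_v(λ^(r))`, and comparing this identity for `λ` and `μ`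
gives the equivalence.
-/
namespace Hooks

open Finset

lemma card_filter_image_of_injOn {α β : Type*} [DecidableEq β] {s : Finset α} {f : α → β}
    (hf : Set.InjOn f s) (P : β → Prop) [DecidablePred P] :
    #{b ∈ s.image f | P b} = #{a ∈ s | P (f a)} := by
  rw [filter_image, card_image_of_injOn (hf.mono fun a ha => (mem_filter.1 ha).1)]

lemma count_flatMap_range_of_nodup {α : Type*} [DecidableEq α] (n : ℕ) (f : ℕ → List α)
    (hf : ∀ i < n, (f i).Nodup) (a : α) :
    ((List.range n).flatMap f).count a = #{i ∈ range n | a ∈ f i} := by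
  rw [List.count_flatMap, card_filter]
  exact sum_congr rfl fun i hi => (hf i (mem_range.1 hi)).count

def hookCount (S : Finset ℕ) (v : ℕ) : ℕ := #{b ∈ S | v ≤ b ∧ b - v ∉ S}

def diffCount (S : Finset ℕ) (v : ℕ) : ℕ := #{b ∈ S | v ≤ b ∧ b - v ∈ S}

lemma hookCount_union_of_lt {A B : Finset ℕ} {v : ℕ} (h : ∀ a ∈ A, ∀ b ∈ B, b + v < a) :
    hookCount (A ∪ B) v = hookCount A v + hookCount B v := by
  have hdisj : Disjoint A B := disjoint_left.2 fun a ha hb => by have := h a ha a hb; omega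
  rw [hookCount, filter_union, card_union_of_disjoint (disjoint_filter_filter hdisj)]
  congr 1 <;> refine congrArg card (filter_congr fun x hx => ?_)
  · by_cases hv : v ≤ x
    · have : x - v ∉ B := fun hB => by have := h x hx _ hB; omega
      simp [hv, this]
    · simp [hv]
  · have : x - v ∉ A := fun hA => by have := h _ hA x hx; omega
    simp [this]

lemma hookCount_add_diffCount {S : Finset ℕ} {v : ℕ} (h : ∀ b ∈ S, v ≤ b) :
    hookCount S v + diffCount S v = #S := by
  rw [← card_filter_add_card_filter_not (s := S) (fun b => b - v ∈ S), add_comm]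
  congr 1 <;> exact congrArg card (filter_congr fun b hb => by simp [h b hb])

lemma diffCount_image_add (S : Finset ℕ) (v n : ℕ) :
    diffCount (S.image (· + n)) v = diffCount S v := by
  rw [diffCount, card_filter_image_of_injOn (add_left_injective n).injOn, diffCount]
  refine congrArg card (filter_congr fun b _ => ?_)
  simp only [mem_image]
  constructor
  · rintro ⟨hv, a, ha, hab⟩
    exact ⟨by omega, by rwa [show b - v = a by omega]⟩
  · rintro ⟨hv, hb⟩
    exact ⟨by omega, b - v, hb, by omega⟩

lemma listDiffs_congr {c d : List ℕ} (hlen : c.length = d.length)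
    (h : ∀ i j, i < j → j < c.length → c.getD i 0 - c.getD j 0 = d.getD i 0 - d.getD j 0) :
    listDiffs c = listDiffs d := by
  unfold listDiffs
  rw [← hlen]
  refine congrArg _ (List.flatMap_congr fun i hi => List.map_congr_left fun j hj => ?_)
  simp only [List.mem_filter, List.mem_range, decide_eq_true_eq] at hj
  exact h i j hj.2 hj.1

theorem count_listDiffs_map_range {p v : ℕ} {f : ℕ → ℕ} (hf : StrictAntiOn f (Set.Iio p))
    (hv : 0 < v) :
    (listDiffs ((List.range p).map f)).count v = diffCount ((range p).image f) v := by
  have hget : ∀ i < p, ((List.range p).map f).getD i 0 = f i := fun i hi => by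
    simp [List.getD_eq_getElem?_getD, hi]
  have hlt : ∀ {i j}, i < p → j < p → (f j < f i ↔ i < j) := fun hi hj => hf.lt_iff_gt hj hi
  rw [listDiffs, Multiset.coe_count, List.length_map, List.length_range,
    count_flatMap_range_of_nodup, diffCount, card_filter_image_of_injOn (coe_range p ▸ hf.injOn)]
  · refine congrArg card (filter_congr fun i hi => ?_)
    have hi := mem_range.1 hi
    simp only [List.mem_map, List.mem_filter, List.mem_range, decide_eq_true_eq, mem_image,
      mem_range]
    constructor
    · rintro ⟨j, ⟨hj, hij⟩, rfl⟩
      rw [hget i hi, hget j hj]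
      have := (hlt hi hj).2 hij
      exact ⟨by omega, j, hj, by omega⟩
    · rintro ⟨hvi, k, hk, hfk⟩
      have := (hlt hi hk).1 (by omega)
      exact ⟨k, ⟨hk, this⟩, by rw [hget i hi, hget k hk]; omega⟩
  · intro i hi
    refine (List.nodup_range.filter _).map_on fun j hj j' hj' h => ?_
    simp only [List.mem_filter, List.mem_range, decide_eq_true_eq] at hj hj'
    rw [hget i hi, hget j hj.1, hget j' hj'.1] at h
    have := (hlt hi hj.1).2 hj.2
    have := (hlt hi hj'.1).2 hj'.2
    exact hf.injOn hj.1 hj'.1 (by omega)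


/-- Equals the first-column hook length `hook l i 0` when all parts are positive. -/
def beta (l : List ℕ) (i : ℕ) : ℕ := l.getD i 0 + (l.length - 1 - i)

def betaSet (l : List ℕ) : Finset ℕ := (range l.length).image (beta l)

def topBeta (l : List ℕ) (p : ℕ) : Finset ℕ := (range p).image (beta l)

section BetaNumbers

variable {l : List ℕ} {p i j k : ℕ}

lemma getD_le_getD (hl : l.Pairwise (· ≥ ·)) (hij : i ≤ j) (hj : j < l.length) :
    l.getD j 0 ≤ l.getD i 0 := by
  rw [List.getD_eq_getElem l 0 hj, List.getD_eq_getElem l 0 (hij.trans_lt hj)]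
  rcases hij.eq_or_lt with rfl | h
  · exact le_rfl
  · exact hl.rel_get_of_lt (a := ⟨i, hij.trans_lt hj⟩) (b := ⟨j, hj⟩) h

lemma beta_le_beta (hl : l.Pairwise (· ≥ ·)) (hij : i ≤ j) (hj : j < l.length) :
    beta l j ≤ beta l i := by
  have := getD_le_getD hl hij hj
  unfold beta; omega

lemma beta_lt_beta (hl : l.Pairwise (· ≥ ·)) (hij : i < j) (hj : j < l.length) :
    beta l j < beta l i := by
  have := getD_le_getD hl hij.le hj
  unfold beta; omega

lemma beta_strictAntiOn (hl : l.Pairwise (· ≥ ·)) (hpl : p ≤ l.length) :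
    StrictAntiOn (beta l) (Set.Iio p) :=
  fun _ _ _ hj hij => beta_lt_beta hl hij (lt_of_lt_of_le hj hpl)

/-- The gap paired with the box `(i, j)`: the box has hook length `beta l i - boxGap l i j`. -/
def boxGap (l : List ℕ) (i j : ℕ) : ℕ :=
  j + #{k ∈ range l.length | i < k ∧ l.getD k 0 ≤ j}

lemma hook_add_boxGap (hi : i < l.length) (hj : j < l.getD i 0) :
    hook l i j + boxGap l i j = beta l i := by
  have hsplit : #{k ∈ range l.length | i < k ∧ j < l.getD k 0}
      + #{k ∈ range l.length | i < k ∧ l.getD k 0 ≤ j} = l.length - i - 1 := by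
    have hIoo : {k ∈ range l.length | i < k} = Ioo i l.length := by
      ext k; simp [and_comm]
    simp only [← filter_filter, ← not_lt, card_filter_add_card_filter_not, hIoo, Nat.card_Ioo]
  unfold hook boxGap beta
  omega

lemma boxGap_strictMono (l : List ℕ) (i : ℕ) : StrictMono (boxGap l i) := by
  intro j j' h
  have : #{k ∈ range l.length | i < k ∧ l.getD k 0 ≤ j}
      ≤ #{k ∈ range l.length | i < k ∧ l.getD k 0 ≤ j'} :=
    card_le_card <| monotone_filter_right _ fun k _ hk => ⟨hk.1, hk.2.trans h.le⟩
  unfold boxGap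
  omega

lemma boxGap_lt_beta (hi : i < l.length) (hj : j < l.getD i 0) : boxGap l i j < beta l i := by
  have := hook_add_boxGap hi hj
  unfold hook at this
  omega

-- Either all rows from `k` on have length at most `j`, and `boxGap l i j` overshoots
-- `beta l k`, or row `k` is longer than `j`, and it undershoots.
lemma boxGap_ne_beta (hl : l.Pairwise (· ≥ ·)) (hik : i < k) (hk : k < l.length) (j : ℕ) :
    boxGap l i j ≠ beta l k := by
  unfold boxGap beta
  by_cases hc : l.getD k 0 ≤ j
  · have : Ico k l.length ⊆ {k' ∈ range l.length | i < k' ∧ l.getD k' 0 ≤ j} := by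
      intro k' hk'
      rw [mem_Ico] at hk'
      simp only [mem_filter, mem_range]
      exact ⟨hk'.2, hik.trans_le hk'.1, (getD_le_getD hl hk'.1 hk'.2).trans hc⟩
    have := card_le_card this
    rw [Nat.card_Ico] at this
    omega
  · have : {k' ∈ range l.length | i < k' ∧ l.getD k' 0 ≤ j} ⊆ Ioo k l.length := by
      intro k' hk'
      simp only [mem_filter, mem_range] at hk'
      refine mem_Ioo.2 ⟨lt_of_not_ge fun hle => hc ?_, hk'.1⟩
      exact (getD_le_getD hl hle hk).trans hk'.2.2
    have := card_le_card this
    rw [Nat.card_Ioo] at this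
    omega

lemma image_boxGap (hl : l.Pairwise (· ≥ ·)) (hi : i < l.length) :
    (range (l.getD i 0)).image (boxGap l i) = range (beta l i) \ betaSet l := by
  have hsub : (range (l.getD i 0)).image (boxGap l i) ⊆ range (beta l i) \ betaSet l := by
    simp only [subset_iff, mem_image, mem_range, mem_sdiff, betaSet]
    rintro _ ⟨j, hj, rfl⟩
    refine ⟨boxGap_lt_beta hi hj, ?_⟩
    rintro ⟨k, hk, hkj⟩
    rcases lt_or_ge i k with hik | hki
    · exact boxGap_ne_beta hl hik hk j hkj.symm
    · have := boxGap_lt_beta hi hj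
      have := beta_le_beta hl hki hi
      omega
  refine eq_of_subset_of_card_le hsub ?_
  have hbelow : (Ioo i l.length).image (beta l) ⊆ range (beta l i) ∩ betaSet l := by
    simp only [subset_iff, mem_image, mem_Ioo, mem_inter, mem_range, betaSet]
    rintro _ ⟨k, ⟨hik, hk⟩, rfl⟩
    exact ⟨beta_lt_beta hl hik hk, k, hk, rfl⟩
  have hcard := card_le_card hbelow
  rw [card_image_of_injOn ((beta_strictAntiOn hl le_rfl).injOn.mono
    fun k hk => (mem_Ioo.1 hk).2), Nat.card_Ioo] at hcard
  rw [card_sdiff, card_range, card_image_of_injective _ (boxGap_strictMono l i).injective,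
    card_range, inter_comm]
  unfold beta at hcard ⊢
  omega

lemma mem_rowHooks_iff (hl : l.Pairwise (· ≥ ·)) (hi : i < l.length) (v : ℕ) :
    v ∈ (List.range (l.getD i 0)).map (fun j => hook l i j) ↔
      v ≤ beta l i ∧ beta l i - v ∉ betaSet l := by
  have hgap : ∀ g,
      g ∈ range (beta l i) \ betaSet l ↔ ∃ j < l.getD i 0, boxGap l i j = g := by
    simp [← image_boxGap hl hi]
  constructor
  · simp only [List.mem_map, List.mem_range]
    rintro ⟨j, hj, rfl⟩
    have := hook_add_boxGap hi hj
    refine ⟨by omega, fun hmem => (mem_sdiff.1 ((hgap _).2 ⟨j, hj, by omega⟩)).2 hmem⟩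
  · rintro ⟨hv, hnot⟩
    have hb : beta l i ∈ betaSet l := mem_image_of_mem _ (mem_range.2 hi)
    obtain ⟨j, hj, hgj⟩ := (hgap (beta l i - v)).1 <| mem_sdiff.2
      ⟨mem_range.2 (by rcases v with _ | v; exacts [absurd hb hnot, by omega]), hnot⟩
    have := hook_add_boxGap hi hj
    exact List.mem_map.2 ⟨j, List.mem_range.2 hj, by omega⟩

lemma nodup_rowHooks (hi : i < l.length) :
    ((List.range (l.getD i 0)).map (fun j => hook l i j)).Nodup := by
  refine (List.nodup_range).map_on fun j hj j' hj' h => (boxGap_strictMono l i).injective ?_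
  have := hook_add_boxGap hi (List.mem_range.1 hj)
  have := hook_add_boxGap hi (List.mem_range.1 hj')
  omega

theorem count_hookMultiset {l : List ℕ} (hl : l.Pairwise (· ≥ ·)) (v : ℕ) :
    (hookMultiset l).count v = hookCount (betaSet l) v := by
  rw [hookMultiset, Multiset.coe_count,
    count_flatMap_range_of_nodup _ _ (fun i hi => nodup_rowHooks hi), hookCount, betaSet,
    card_filter_image_of_injOn (coe_range l.length ▸ (beta_strictAntiOn hl le_rfl).injOn)]
  exact congrArg card (filter_congr fun i hi => mem_rowHooks_iff hl (mem_range.1 hi) v)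

lemma zero_notMem_hookMultiset (l : List ℕ) : 0 ∉ hookMultiset l := by
  simp only [hookMultiset, Multiset.mem_coe, List.mem_flatMap, List.mem_map, List.mem_range,
    not_exists, not_and, hook]
  omega

lemma frontSection_getD (hpl : p ≤ l.length) (hi : i < p) :
    (frontSection l p).getD i 0 = l.getD i 0 + 1 - l.getD (p - 1) 0 := by
  simp [frontSection, List.getD_eq_getElem?_getD, hi, show i < l.length by omega]

lemma charList_frontSection_getD_add (hl : l.Pairwise (· ≥ ·)) (hpl : p ≤ l.length)
    (hi : i < p) :
    (charList (frontSection l p)).getD i 0 + beta l (p - 1) = beta l i + 1 := by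
  have hlen : (frontSection l p).length = p := by simp [frontSection, hpl]
  have hrows : {k ∈ range p | i < k ∧ 0 < (frontSection l p).getD k 0} = Ioo i p := by
    ext k
    simp only [mem_filter, mem_range, mem_Ioo]
    refine ⟨fun h => ⟨h.2.1, h.1⟩, fun h => ⟨h.2, h.1, ?_⟩⟩
    rw [frontSection_getD hpl h.2]
    have := getD_le_getD hl (show k ≤ p - 1 by omega) (show p - 1 < l.length by omega)
    omega
  have := getD_le_getD hl (show i ≤ p - 1 by omega) (show p - 1 < l.length by omega)
  have hchar : (charList (frontSection l p)).getD i 0 = hook (frontSection l p) i 0 := by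
    simp [charList, List.getD_eq_getElem?_getD, hlen, hi]
  rw [hchar, hook, hlen, hrows, Nat.card_Ioo, frontSection_getD hpl hi, beta, beta]
  omega

lemma getD_map_range {f : ℕ → ℕ} (hi : i < p) : ((List.range p).map f).getD i 0 = f i := by
  simp [List.getD_eq_getElem?_getD, hi]

lemma missingHooks_eq_listDiffs_beta (hl : l.Pairwise (· ≥ ·)) (hpl : p ≤ l.length) :
    missingHooks l p = listDiffs ((List.range p).map (beta l)) := by
  refine listDiffs_congr (by simp [charList, frontSection, hpl]) fun i j hij hj => ?_
  have hj : j < p := by simpa [charList, frontSection, hpl] using hj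
  have := charList_frontSection_getD_add hl hpl (hij.trans hj)
  have := charList_frontSection_getD_add hl hpl hj
  have := beta_lt_beta hl hij (by omega)
  rw [getD_map_range (hij.trans hj), getD_map_range hj]
  omega

theorem count_missingHooks (hl : l.Pairwise (· ≥ ·)) (hpl : p ≤ l.length) {v : ℕ}
    (hv : 0 < v) :
    (missingHooks l p).count v = diffCount (topBeta l p) v := by
  rw [missingHooks_eq_listDiffs_beta hl hpl,
    count_listDiffs_map_range (beta_strictAntiOn hl hpl) hv, topBeta]

lemma zero_notMem_missingHooks (hl : l.Pairwise (· ≥ ·)) (hpl : p ≤ l.length) :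
    0 ∉ missingHooks l p := by
  rw [missingHooks_eq_listDiffs_beta hl hpl]
  simp only [listDiffs, Multiset.mem_coe, List.mem_flatMap, List.mem_map, List.mem_filter,
    List.mem_range, List.length_map, List.length_range, decide_eq_true_eq, not_exists, not_and]
  intro i hi j ⟨hj, hij⟩ hdiff
  rw [getD_map_range hi, getD_map_range hj] at hdiff
  have := beta_lt_beta hl hij (by omega)
  omega

end BetaNumbers

section Bump

variable {l : List ℕ} {p n i : ℕ}

lemma pairwise_bump (hl : l.Pairwise (· ≥ ·)) : (bump l p n).Pairwise (· ≥ ·) := by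
  rw [← List.take_append_drop p l, List.pairwise_append] at hl
  obtain ⟨htake, hdrop, hcross⟩ := hl
  refine List.pairwise_append.2 ⟨List.pairwise_map.2 (htake.imp fun h => by omega), hdrop, ?_⟩
  simp only [List.mem_map]
  rintro _ ⟨a, ha, rfl⟩ b hb
  have := hcross a ha b hb
  omega

lemma length_bump (hpl : p ≤ l.length) : (bump l p n).length = l.length := by
  simp [bump]; omega

lemma getD_bump (hpl : p ≤ l.length) :
    (bump l p n).getD i 0 = if i < p then l.getD i 0 + n else l.getD i 0 := by
  have hlen : ((l.take p).map (· + n)).length = p := by simp [hpl]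
  unfold bump
  split_ifs with hi
  · rw [List.getD_append _ _ _ _ (by rw [hlen]; exact hi)]
    simp [List.getD_eq_getElem?_getD, hi, show i < l.length by omega]
  · rw [List.getD_append_right _ _ _ _ (by omega), hlen]
    simp [List.getD_eq_getElem?_getD, show p + (i - p) = i by omega]

lemma beta_bump (hpl : p ≤ l.length) :
    beta (bump l p n) i = if i < p then beta l i + n else beta l i := by
  unfold beta
  rw [length_bump hpl, getD_bump hpl]
  split_ifs <;> omega

lemma beta_drop : beta (l.drop p) i = beta l (p + i) := by
  simp only [beta, List.getD_eq_getElem?_getD, List.getElem?_drop, List.length_drop]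
  omega

lemma betaSet_bump (hpl : p ≤ l.length) :
    betaSet (bump l p n) = (topBeta l p).image (· + n) ∪ betaSet (l.drop p) := by
  ext b
  simp only [betaSet, topBeta, mem_union, mem_image, mem_range, length_bump hpl,
    List.length_drop, beta_bump hpl, beta_drop, exists_exists_and_eq_and]
  constructor
  · rintro ⟨i, hi, rfl⟩
    by_cases hip : i < p
    · exact .inl ⟨i, hip, by simp [hip]⟩
    · exact .inr ⟨i - p, by omega, by simp [hip, show p + (i - p) = i by omega]⟩
  · rintro (⟨i, hi, rfl⟩ | ⟨i, hi, rfl⟩)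
    · exact ⟨i, by omega, by simp [hi]⟩
    · exact ⟨p + i, by omega, by simp⟩

lemma card_topBeta (hl : l.Pairwise (· ≥ ·)) (hpl : p ≤ l.length) : #(topBeta l p) = p := by
  rw [topBeta, card_image_of_injOn (coe_range p ▸ (beta_strictAntiOn hl hpl).injOn), card_range]

theorem count_hookMultiset_bump_add (hl : l.Pairwise (· ≥ ·)) (hpl : p ≤ l.length) {v n : ℕ}
    (hv : 0 < v) (hn : beta l 0 + v < n) :
    (hookMultiset (bump l p n)).count v + (missingHooks l p).count v
      = p + (hookMultiset (l.drop p)).count v := by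
  have htop : ∀ a ∈ (topBeta l p).image (· + n), n ≤ a := by simp [topBeta]
  have hrest : ∀ b ∈ betaSet (l.drop p), b ≤ beta l 0 := by
    simp only [betaSet, mem_image, mem_range, List.length_drop, forall_exists_index, and_imp]
    rintro _ i hi rfl
    exact beta_drop ▸ beta_le_beta hl (Nat.zero_le _) (by omega)
  rw [count_hookMultiset (pairwise_bump hl), count_missingHooks hl hpl hv,
    count_hookMultiset hl.drop, betaSet_bump hpl,
    hookCount_union_of_lt fun a ha b hb => by have := htop a ha; have := hrest b hb; omega,
    ← diffCount_image_add _ v n, add_right_comm,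
    hookCount_add_diffCount fun a ha => by have := htop a ha; omega,
    card_image_of_injective _ (add_left_injective n), card_topBeta hl hpl]

end Bump

end Hooks

open Hooks

theorem stmt13_general (l m : List ℕ) (p : ℕ)
    (hl : IsPartition l) (hm : IsPartition m)
    (hpl : p < l.length) (hpm : p < m.length)
    (hper : ∀ n : ℕ, hookMultiset (bump l p n) = hookMultiset (bump m p n)) :
    hookMultiset (l.drop p) = hookMultiset (m.drop p) ↔
      missingHooks l p = missingHooks m p := by
  have key : ∀ v, 0 < v → (hookMultiset (l.drop p)).count v + (missingHooks m p).count v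
      = (hookMultiset (m.drop p)).count v + (missingHooks l p).count v := by
    intro v hv
    have hL := count_hookMultiset_bump_add hl.1 hpl.le hv
      (n := beta l 0 + beta m 0 + v + 1) (by omega)
    have hM := count_hookMultiset_bump_add hm.1 hpm.le hv
      (n := beta l 0 + beta m 0 + v + 1) (by omega)
    rw [hper] at hL
    omega
  have hzero : ∀ {s t : Multiset ℕ}, 0 ∉ s → 0 ∉ t → s.count 0 = t.count 0 :=
    fun hs ht => by rw [Multiset.count_eq_zero.2 hs, Multiset.count_eq_zero.2 ht]
  rw [Multiset.ext, Multiset.ext]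
  constructor <;> intro h v <;> rcases v.eq_zero_or_pos with rfl | hv
  · exact hzero (zero_notMem_missingHooks hl.1 hpl.le)
      (zero_notMem_missingHooks hm.1 hpm.le)
  · have := key v hv; have := h v; omega
  · exact hzero (zero_notMem_hookMultiset _) (zero_notMem_hookMultiset _)
  · have := key v hv; have := h v; omega

/-- In a periodic cluster, remainders are clustered iff the ∞-partitions are clustered. -/
theorem stmt13 (l m : List ℕ) (p : ℕ) (hp : 0 < p)
    (hl : IsPartition l) (hm : IsPartition m)
    (hpl : p < l.length) (hpm : p < m.length)
    (hper : ∀ n : ℕ, hookMultiset (bump l p n) = hookMultiset (bump m p n)) :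
    hookMultiset (l.drop p) = hookMultiset (m.drop p) ↔
      missingHooks l p = missingHooks m p :=
  stmt13_general l m p hl hm hpl hpm hper
end

section
/- Let λ = [λ_∞, λ^(r), e]_p be a partition with partition datum of period p, let c^(r) be the number of columns of the remainder λ^(r), and let λ^(f) be the front section. Then the weight of λ satisfies |λ| = |λ^(r)| + |λ^(f)| + (c^(r) + e − 1)·p. -/
/-!
Cutting `λ` after its `p`-th row leaves the remainder `λ^(r)` below. Each of the top `p` rows
is at least `λ_p`, and deleting the `λ_p - 1` full-height columns shortens each of them by exactly
that much, so the top rows weigh `|λ^(f)| + (λ_p - 1)·p`. Finally `λ_p = λ_{p+1} + e = c^(r) + e`.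
-/

theorem IsPartition.getD_antitone {l : List ℕ} (hl : IsPartition l) :
    Antitone fun i => l.getD i 0 := by
  intro i j hij
  dsimp only
  by_cases hj : j < l.length
  · rw [List.getD_eq_getElem l 0 hj, List.getD_eq_getElem l 0 (by omega)]
    rcases hij.eq_or_lt with rfl | hlt
    · exact le_rfl
    · exact List.pairwise_iff_getElem.mp hl.1 i j (by omega) hj hlt
  · rw [List.getD_eq_default l 0 (not_lt.mp hj)]
    exact Nat.zero_le _

theorem IsPartition.getD_pos_s15 {l : List ℕ} (hl : IsPartition l) {i : ℕ} (hi : i < l.length) :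
    0 < l.getD i 0 := by
  rw [List.getD_eq_getElem l 0 hi]
  exact hl.2 _ (List.getElem_mem hi)

theorem List.sum_map_add_const (t : List ℕ) (c : ℕ) :
    (t.map fun v => v + c).sum = t.sum + t.length * c := by
  simp [List.sum_map_add]

theorem frontSection_sum_add {l : List ℕ} {p : ℕ} (hl : IsPartition l) (hpl : p < l.length) :
    (frontSection l p).sum + p * (l.getD (p - 1) 0 - 1) = (l.take p).sum := by
  set a := l.getD (p - 1) 0
  have ha : 0 < a := hl.getD_pos_s15 (by omega)
  have hunfold : (frontSection l p).map (fun v => v + (a - 1)) = l.take p := by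
    rw [frontSection, List.map_map]
    refine (List.map_congr_left fun v hv => ?_).trans (List.map_id _)
    obtain ⟨i, hi, rfl⟩ := List.mem_iff_getElem.mp hv
    have hia : a ≤ (l.take p)[i] := by
      rw [List.getElem_take, ← List.getD_eq_getElem l 0]
      exact hl.getD_antitone (by rw [List.length_take] at hi; omega)
    simp only [Function.comp_apply, id]
    omega
  rw [← hunfold, List.sum_map_add_const, frontSection, List.length_map, List.length_take,
    min_eq_left hpl.le]

theorem stmt15_general (l : List ℕ) (p : ℕ)
    (hl : IsPartition l) (hpl : p < l.length) :
    l.sum = (l.drop p).sum + (frontSection l p).sum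
      + ((l.drop p).headD 0 + extension l p - 1) * p := by
  have hhead : (l.drop p).headD 0 = l.getD p 0 := by
    rw [List.drop_eq_getElem_cons hpl, List.getD_eq_getElem l 0 hpl]; rfl
  have hcols : l.getD p 0 + extension l p = l.getD (p - 1) 0 :=
    Nat.add_sub_of_le (hl.getD_antitone (Nat.sub_le p 1))
  rw [hhead, hcols, ← List.sum_take_add_sum_drop l p, ← frontSection_sum_add hl hpl]
  ring

/-- Weight of a partition in terms of its `p`-partition datum:
`|λ| = |λ^(r)| + |λ^(f)| + (c^(r) + e - 1)·p`. -/
theorem stmt15 (l : List ℕ) (p : ℕ) (hp : 0 < p)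
    (hl : IsPartition l) (hpl : p < l.length) :
    l.sum = (l.drop p).sum + (frontSection l p).sum
      + ((l.drop p).headD 0 + extension l p - 1) * p :=
  stmt15_general l p hl hpl
end
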